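/- arXiv:1112.1887 — 2 statements merged into one kernel-verified Lean document; each statement's English description precedes it below -/
import Mathlib

section
/- Let k be a field and n ≥ 1. Consider the k-algebras A_n := k[t]/(t^{n+1}), A_{n-1} := k[t]/(t^n), B_{n-1} := k[t,ε]/(t^n, ε²) and C_n := k[t,ε]/(t^{n+1}, ε², εt^n). Then the k-algebra homomorphism C_n → B_{n-1} ×_{A_{n-1}} A_n, induced by the two canonical surjections C_n → B_{n-1} (reduction of t modulo t^n) and C_n → A_n (setting ε = 0), is an isomorphism onto the fiber product of B_{n-1} → A_{n-1} (setting ε = 0) and A_n → A_{n-1} (reduction of t modulo t^n). -/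
open Polynomial

/-- `k[t,ε]`, realized as `(k[t])[ε]` with `t` the inner and `ε` the outer variable. -/
noncomputable abbrev kTE (k : Type*) [Field k] : Type _ := Polynomial (Polynomial k)

/-- The variable `t` in `k[t,ε]`. -/
noncomputable abbrev tP (k : Type*) [Field k] : kTE k := Polynomial.C Polynomial.X

/-- The variable `ε` in `k[t,ε]`. -/
noncomputable abbrev eP (k : Type*) [Field k] : kTE k := Polynomial.X

/-- Write `a = u tⁿ + v ε²`. Then `u(0) tⁿ ∈ (t^{n+1})` forces `t ∣ u(0)`, so `u ∈ (t, ε)` and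
`u tⁿ ∈ (t^{n+1}, ε tⁿ)`. -/
theorem mem_span_C_X_pow_succ_of_eval_zero_mem {R : Type*} [CommRing R] {n : ℕ} {a : R[X][X]}
    (ha : a ∈ Ideal.span {C X ^ n, X ^ 2})
    (ha₀ : a.eval 0 ∈ Ideal.span {(X : R[X]) ^ (n + 1)}) :
    a ∈ Ideal.span {C X ^ (n + 1), X ^ 2, X * C X ^ n} := by
  obtain ⟨u, v, rfl⟩ := Ideal.mem_span_pair.mp ha
  obtain ⟨w, hw⟩ : X ∣ u.eval 0 := by
    obtain ⟨d, hd⟩ := Ideal.mem_span_singleton.mp ha₀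
    refine ⟨d, (isRegular_X_pow (R := R) n).left ?_⟩
    simp only [eval_add, eval_mul, eval_pow, eval_C, eval_X, zero_pow two_ne_zero, mul_zero,
      add_zero] at hd
    linear_combination hd
  obtain ⟨r, hr⟩ := X_dvd_sub_C (p := u)
  rw [coeff_zero_eq_eval_zero, hw, C_mul] at hr
  have hu : u * C X ^ n + v * X ^ 2 = C w * C X ^ (n + 1) + r * (X * C X ^ n) + v * X ^ 2 := by
    linear_combination (C X ^ n) * hr
  rw [hu]
  refine add_mem (add_mem ?_ ?_) ?_ <;> exact Ideal.mul_mem_left _ _ (Ideal.subset_span (by simp))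

theorem Cn_isomorphic_to_fiber_product_general
    (k : Type*) [Field k] (n : ℕ)
    -- the canonical surjection `C_n → B_{n-1}` (reduction of `t` modulo `tⁿ`)
    (p : (kTE k ⧸ Ideal.span {tP k ^ (n + 1), eP k ^ 2, eP k * tP k ^ n}) →ₐ[k]
        kTE k ⧸ Ideal.span {tP k ^ n, eP k ^ 2})
    (hp : ∀ x : kTE k, p (Ideal.Quotient.mk _ x) = Ideal.Quotient.mk _ x)
    -- the canonical surjection `C_n → A_n` (setting `ε = 0`)
    (q : (kTE k ⧸ Ideal.span {tP k ^ (n + 1), eP k ^ 2, eP k * tP k ^ n}) →ₐ[k]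
        Polynomial k ⧸ Ideal.span {(X : Polynomial k) ^ (n + 1)})
    (hq : ∀ x : kTE k,
      q (Ideal.Quotient.mk _ x) = Ideal.Quotient.mk _ (Polynomial.eval 0 x))
    -- the map `B_{n-1} → A_{n-1}` (setting `ε = 0`)
    (f : (kTE k ⧸ Ideal.span {tP k ^ n, eP k ^ 2}) →ₐ[k]
        Polynomial k ⧸ Ideal.span {(X : Polynomial k) ^ n})
    (hf : ∀ x : kTE k,
      f (Ideal.Quotient.mk _ x) = Ideal.Quotient.mk _ (Polynomial.eval 0 x))
    -- the map `A_n → A_{n-1}` (reduction of `t` modulo `tⁿ`)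
    (g : (Polynomial k ⧸ Ideal.span {(X : Polynomial k) ^ (n + 1)}) →ₐ[k]
        Polynomial k ⧸ Ideal.span {(X : Polynomial k) ^ n})
    (hg : ∀ y : Polynomial k, g (Ideal.Quotient.mk _ y) = Ideal.Quotient.mk _ y) :
    Function.Injective (fun x : kTE k ⧸ Ideal.span {tP k ^ (n + 1), eP k ^ 2, eP k * tP k ^ n}
        => (p x, q x)) ∧
      Set.range (fun x : kTE k ⧸ Ideal.span {tP k ^ (n + 1), eP k ^ 2, eP k * tP k ^ n}
        => (p x, q x)) = {z | f z.1 = g z.2} := by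
  refine ⟨?injective, Set.Subset.antisymm ?range_subset ?subset_range⟩
  case injective =>
    intro x y hxy
    obtain ⟨a, rfl⟩ := Ideal.Quotient.mk_surjective x
    obtain ⟨b, rfl⟩ := Ideal.Quotient.mk_surjective y
    simp only [Prod.mk.injEq, hp, hq, Ideal.Quotient.eq, ← eval_sub] at hxy ⊢
    exact mem_span_C_X_pow_succ_of_eval_zero_mem hxy.1 hxy.2
  case range_subset =>
    rintro _ ⟨x, rfl⟩
    obtain ⟨a, rfl⟩ := Ideal.Quotient.mk_surjective x
    show f (p _) = g (q _)
    rw [hp, hq, hf, hg]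
  case subset_range =>
    rintro ⟨y, z⟩ hyz
    obtain ⟨a, rfl⟩ := Ideal.Quotient.mk_surjective y
    obtain ⟨c, rfl⟩ := Ideal.Quotient.mk_surjective z
    obtain ⟨d, hd⟩ : X ^ n ∣ a.eval 0 - c := by
      simpa only [Set.mem_ofPred_eq, hf, hg, Ideal.Quotient.eq, Ideal.mem_span_singleton] using hyz
    -- the correction `tⁿ d` turns the ε-free part of `a` into `c` and vanishes in `B_{n-1}`
    refine ⟨Ideal.Quotient.mk _ (a - C (X ^ n * d)), ?_⟩
    simp only [hp, hq, Prod.mk.injEq, Ideal.Quotient.eq]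
    constructor
    · rw [sub_sub_cancel_left, C_mul, C_pow, neg_mem_iff]
      exact Ideal.mul_mem_right _ _ (Ideal.subset_span (by simp))
    · rw [eval_sub, eval_C, ← hd, sub_sub_cancel, sub_self]
      exact zero_mem _

/-- For `n ≥ 1`, the ring `C_n = k[t,ε]/(t^{n+1}, ε², εtⁿ)` maps isomorphically onto the
fiber product of `B_{n-1} = k[t,ε]/(tⁿ, ε²) → A_{n-1} = k[t]/(tⁿ)` (setting `ε = 0`) and
`A_n = k[t]/(t^{n+1}) → A_{n-1}` (reduction mod `tⁿ`), via the two canonical surjections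
`C_n → B_{n-1}` and `C_n → A_n`. -/
theorem Cn_isomorphic_to_fiber_product
    (k : Type*) [Field k] (n : ℕ) (hn : 1 ≤ n)
    -- the canonical surjection `C_n → B_{n-1}` (reduction of `t` modulo `tⁿ`)
    (p : (kTE k ⧸ Ideal.span {tP k ^ (n + 1), eP k ^ 2, eP k * tP k ^ n}) →ₐ[k]
        kTE k ⧸ Ideal.span {tP k ^ n, eP k ^ 2})
    (hp : ∀ x : kTE k, p (Ideal.Quotient.mk _ x) = Ideal.Quotient.mk _ x)
    -- the canonical surjection `C_n → A_n` (setting `ε = 0`)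
    (q : (kTE k ⧸ Ideal.span {tP k ^ (n + 1), eP k ^ 2, eP k * tP k ^ n}) →ₐ[k]
        Polynomial k ⧸ Ideal.span {(X : Polynomial k) ^ (n + 1)})
    (hq : ∀ x : kTE k,
      q (Ideal.Quotient.mk _ x) = Ideal.Quotient.mk _ (Polynomial.eval 0 x))
    -- the map `B_{n-1} → A_{n-1}` (setting `ε = 0`)
    (f : (kTE k ⧸ Ideal.span {tP k ^ n, eP k ^ 2}) →ₐ[k]
        Polynomial k ⧸ Ideal.span {(X : Polynomial k) ^ n})
    (hf : ∀ x : kTE k,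
      f (Ideal.Quotient.mk _ x) = Ideal.Quotient.mk _ (Polynomial.eval 0 x))
    -- the map `A_n → A_{n-1}` (reduction of `t` modulo `tⁿ`)
    (g : (Polynomial k ⧸ Ideal.span {(X : Polynomial k) ^ (n + 1)}) →ₐ[k]
        Polynomial k ⧸ Ideal.span {(X : Polynomial k) ^ n})
    (hg : ∀ y : Polynomial k, g (Ideal.Quotient.mk _ y) = Ideal.Quotient.mk _ y) :
    Function.Injective (fun x : kTE k ⧸ Ideal.span {tP k ^ (n + 1), eP k ^ 2, eP k * tP k ^ n}
        => (p x, q x)) ∧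
      Set.range (fun x : kTE k ⧸ Ideal.span {tP k ^ (n + 1), eP k ^ 2, eP k * tP k ^ n}
        => (p x, q x)) = {z | f z.1 = g z.2} :=
  Cn_isomorphic_to_fiber_product_general k n p hp q hq f hf g hg
end

section
/- Let k be a field, n ≥ 1, and let R be a commutative k-algebra. Set A_n := k[t]/(t^{n+1}), A_{n-1} := k[t]/(t^n), B_n := k[t,ε]/(t^{n+1}, ε²), B_{n-1} := k[t,ε]/(t^n, ε²) and C_n := k[t,ε]/(t^{n+1}, ε², εt^n). Suppose that for every k-algebra homomorphism ξ : R → A_n, writing ξ' : R → A_{n-1} for its composition with the reduction A_n → A_{n-1}, the map { φ ∈ Hom_{k-alg}(R, B_n) : π_n ∘ φ = ξ } → { ψ ∈ Hom_{k-alg}(R, B_{n-1}) : π_{n-1} ∘ ψ = ξ' } given by composing with the reduction B_n → B_{n-1} (t^n ↦ 0) is surjective, where π_n : B_n → A_n and π_{n-1} : B_{n-1} → A_{n-1} are the maps setting ε = 0. Then the map Hom_{k-alg}(R, B_n) → Hom_{k-alg}(R, C_n) given by composing with the canonical surjection B_n → C_n is surjective. -/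
open Polynomial

/-!
Since `ε² = 0` in `C_n`, an element of `C_n` is `a + b ε` with `a ∈ A_n` and `b ∈ A_{n-1}`
(because `ε tⁿ = 0`), so `C_n` is the fibre product `A_n ×_{A_{n-1}} B_{n-1}`: a map
`χ : R → C_n` is the same as a compatible pair `(ξ, ψ)` of maps to `A_n` and `B_{n-1}`.
The hypothesis lifts such a pair to `φ : R → B_n`, and `s ∘ φ` has the same components as `χ`.
-/

section

variable (k : Type*) [Field k] (n : ℕ)

lemma span_C_le_span_B :
    Ideal.span {tP k ^ (n + 1), eP k ^ 2, eP k * tP k ^ n} ≤ Ideal.span {tP k ^ n, eP k ^ 2} := by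
  have ht : tP k ^ n ∈ Ideal.span {tP k ^ n, eP k ^ 2} := Ideal.subset_span (by simp)
  rw [Ideal.span_le]
  rintro z (rfl | rfl | rfl)
  · rw [pow_succ]
    exact Ideal.mul_mem_right _ _ ht
  · exact Ideal.subset_span (by simp)
  · exact Ideal.mul_mem_left _ _ ht

noncomputable abbrev evalEpsZero : kTE k →ₐ[k] k[X] :=
  (aeval (0 : k[X])).restrictScalars k

lemma span_C_le_comap_evalEpsZero :
    Ideal.span {tP k ^ (n + 1), eP k ^ 2, eP k * tP k ^ n} ≤
      (Ideal.span {(X : k[X]) ^ (n + 1)}).comap (evalEpsZero k) := by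
  rw [Ideal.span_le]
  rintro z (rfl | rfl | rfl) <;> simp

/-- The projection `C_n → A_n`, setting `ε = 0`. -/
noncomputable def cToA :
    (kTE k ⧸ Ideal.span {tP k ^ (n + 1), eP k ^ 2, eP k * tP k ^ n}) →ₐ[k]
      k[X] ⧸ Ideal.span {(X : k[X]) ^ (n + 1)} :=
  Ideal.quotientMapₐ _ (evalEpsZero k) (span_C_le_comap_evalEpsZero k n)

/-- The projection `C_n → B_{n-1}`, setting `tⁿ = 0`. -/
noncomputable def cToB :
    (kTE k ⧸ Ideal.span {tP k ^ (n + 1), eP k ^ 2, eP k * tP k ^ n}) →ₐ[k]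
      kTE k ⧸ Ideal.span {tP k ^ n, eP k ^ 2} :=
  Ideal.Quotient.factorₐ k (span_C_le_span_B k n)

@[simp]
lemma cToA_mk (x : kTE k) :
    cToA k n (Ideal.Quotient.mk _ x) = Ideal.Quotient.mk _ (eval 0 x) := by
  simp [cToA, coe_aeval_eq_eval]

@[simp]
lemma cToB_mk (x : kTE k) :
    cToB k n (Ideal.Quotient.mk _ x) = Ideal.Quotient.mk _ x := rfl

lemma X_pow_dvd_coeff_one_of_mem_span {x : kTE k}
    (hx : x ∈ Ideal.span {tP k ^ n, eP k ^ 2}) : (X : k[X]) ^ n ∣ x.coeff 1 := by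
  obtain ⟨a, b, rfl⟩ := Ideal.mem_span_pair.mp hx
  refine ⟨a.coeff 1, ?_⟩
  rw [tP, ← C_pow, coeff_add, coeff_mul_C, eP, coeff_mul_X_pow']
  simp [mul_comm]

/-- Write `x = x₀ + x₁ ε + x₂ ε²`: then `x₀ = x|_{ε=0}` is a multiple of `t^{n+1}` and `x₁` one of
`tⁿ`. -/
lemma mem_span_C_of_mem_span_B {x : kTE k}
    (hA : eval 0 x ∈ Ideal.span {(X : k[X]) ^ (n + 1)})
    (hB : x ∈ Ideal.span {tP k ^ n, eP k ^ 2}) :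
    x ∈ Ideal.span {tP k ^ (n + 1), eP k ^ 2, eP k * tP k ^ n} := by
  obtain ⟨u, hu⟩ := Ideal.mem_span_singleton'.mp hA
  obtain ⟨v, hv⟩ := X_pow_dvd_coeff_one_of_mem_span k n hB
  have hx : x = x.divX.divX * eP k ^ 2 + eP k * tP k ^ n * C v + tP k ^ (n + 1) * C u := by
    conv_lhs => rw [← divX_mul_X_add x, ← divX_mul_X_add x.divX]
    rw [coeff_divX, hv, coeff_zero_eq_eval_zero, ← hu]
    simp only [tP, eP, C_mul, C_pow]
    ring
  rw [hx]
  refine Ideal.add_mem _ (Ideal.add_mem _ ?_ ?_) ?_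
  · exact Ideal.mul_mem_left _ _ (Ideal.subset_span (by simp))
  · exact Ideal.mul_mem_right _ _ (Ideal.subset_span (by simp))
  · exact Ideal.mul_mem_right _ _ (Ideal.subset_span (by simp))

lemma eq_of_cToA_eq_of_cToB_eq
    {y z : kTE k ⧸ Ideal.span {tP k ^ (n + 1), eP k ^ 2, eP k * tP k ^ n}}
    (hA : cToA k n y = cToA k n z) (hB : cToB k n y = cToB k n z) : y = z := by
  obtain ⟨a, rfl⟩ := Ideal.Quotient.mk_surjective y
  obtain ⟨b, rfl⟩ := Ideal.Quotient.mk_surjective z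
  rw [cToA_mk, cToA_mk, Ideal.Quotient.eq, ← eval_sub] at hA
  rw [cToB_mk, cToB_mk, Ideal.Quotient.eq] at hB
  exact Ideal.Quotient.eq.mpr (mem_span_C_of_mem_span_B k n hA hB)

end

theorem hom_to_Bn_surjects_onto_hom_to_Cn_general
    (k : Type*) [Field k] (n : ℕ)
    (R : Type*) [CommRing R] [Algebra k R]
    -- `π_n : B_n → A_n`, setting `ε = 0`
    (πn : (kTE k ⧸ Ideal.span {tP k ^ (n + 1), eP k ^ 2}) →ₐ[k]
        Polynomial k ⧸ Ideal.span {(X : Polynomial k) ^ (n + 1)})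
    (hπn : ∀ x : kTE k,
      πn (Ideal.Quotient.mk _ x) = Ideal.Quotient.mk _ (Polynomial.eval 0 x))
    -- `π_{n-1} : B_{n-1} → A_{n-1}`, setting `ε = 0`
    (πn' : (kTE k ⧸ Ideal.span {tP k ^ n, eP k ^ 2}) →ₐ[k]
        Polynomial k ⧸ Ideal.span {(X : Polynomial k) ^ n})
    (hπn' : ∀ x : kTE k,
      πn' (Ideal.Quotient.mk _ x) = Ideal.Quotient.mk _ (Polynomial.eval 0 x))
    -- the reduction `A_n → A_{n-1}` (reduction of `t` modulo `tⁿ`)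
    (redA : (Polynomial k ⧸ Ideal.span {(X : Polynomial k) ^ (n + 1)}) →ₐ[k]
        Polynomial k ⧸ Ideal.span {(X : Polynomial k) ^ n})
    (hredA : ∀ y : Polynomial k, redA (Ideal.Quotient.mk _ y) = Ideal.Quotient.mk _ y)
    -- the reduction `B_n → B_{n-1}` (`tⁿ ↦ 0`)
    (redB : (kTE k ⧸ Ideal.span {tP k ^ (n + 1), eP k ^ 2}) →ₐ[k]
        kTE k ⧸ Ideal.span {tP k ^ n, eP k ^ 2})
    (hredB : ∀ x : kTE k, redB (Ideal.Quotient.mk _ x) = Ideal.Quotient.mk _ x)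
    -- the canonical surjection `B_n → C_n`
    (s : (kTE k ⧸ Ideal.span {tP k ^ (n + 1), eP k ^ 2}) →ₐ[k]
        kTE k ⧸ Ideal.span {tP k ^ (n + 1), eP k ^ 2, eP k * tP k ^ n})
    (hs : ∀ x : kTE k, s (Ideal.Quotient.mk _ x) = Ideal.Quotient.mk _ x)
    -- surjectivity of the maps between the fibers over `ξ` and `ξ' = redA ∘ ξ`
    (hfib : ∀ ξ : R →ₐ[k] Polynomial k ⧸ Ideal.span {(X : Polynomial k) ^ (n + 1)},
      ∀ ψ : R →ₐ[k] kTE k ⧸ Ideal.span {tP k ^ n, eP k ^ 2},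
        πn'.comp ψ = redA.comp ξ →
          ∃ φ : R →ₐ[k] kTE k ⧸ Ideal.span {tP k ^ (n + 1), eP k ^ 2},
            πn.comp φ = ξ ∧ redB.comp φ = ψ) :
    Function.Surjective
      (fun φ : R →ₐ[k] kTE k ⧸ Ideal.span {tP k ^ (n + 1), eP k ^ 2} => s.comp φ) := by
  intro χ
  have hAs : (cToA k n).comp s = πn :=
    Ideal.Quotient.algHom_ext k (AlgHom.ext fun x => by simp [hs, hπn])
  have hBs : (cToB k n).comp s = redB :=
    Ideal.Quotient.algHom_ext k (AlgHom.ext fun x => by simp [hs, hredB])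
  have hcompat : πn'.comp ((cToB k n).comp χ) = redA.comp ((cToA k n).comp χ) := by
    ext r
    obtain ⟨x, hx⟩ := Ideal.Quotient.mk_surjective (χ r)
    simp [← hx, hπn', hredA]
  obtain ⟨φ, hφA, hφB⟩ := hfib _ _ hcompat
  rw [← hAs] at hφA
  rw [← hBs] at hφB
  exact ⟨φ, AlgHom.ext fun r =>
    eq_of_cToA_eq_of_cToB_eq k n (AlgHom.congr_fun hφA r) (AlgHom.congr_fun hφB r)⟩

/-- Second step of the T¹-lifting principle, for the deformation functor
`D = Hom_{k-alg}(R, ·)`: if for all `ξ : R → A_n` the induced map between the fibers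
`D(B_n)_ξ → D(B_{n-1})_{ξ'}` is surjective, then `D(B_n) → D(C_n)` is surjective. -/
theorem hom_to_Bn_surjects_onto_hom_to_Cn
    (k : Type*) [Field k] (n : ℕ) (hn : 1 ≤ n)
    (R : Type*) [CommRing R] [Algebra k R]
    -- `π_n : B_n → A_n`, setting `ε = 0`
    (πn : (kTE k ⧸ Ideal.span {tP k ^ (n + 1), eP k ^ 2}) →ₐ[k]
        Polynomial k ⧸ Ideal.span {(X : Polynomial k) ^ (n + 1)})
    (hπn : ∀ x : kTE k,
      πn (Ideal.Quotient.mk _ x) = Ideal.Quotient.mk _ (Polynomial.eval 0 x))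
    -- `π_{n-1} : B_{n-1} → A_{n-1}`, setting `ε = 0`
    (πn' : (kTE k ⧸ Ideal.span {tP k ^ n, eP k ^ 2}) →ₐ[k]
        Polynomial k ⧸ Ideal.span {(X : Polynomial k) ^ n})
    (hπn' : ∀ x : kTE k,
      πn' (Ideal.Quotient.mk _ x) = Ideal.Quotient.mk _ (Polynomial.eval 0 x))
    -- the reduction `A_n → A_{n-1}` (reduction of `t` modulo `tⁿ`)
    (redA : (Polynomial k ⧸ Ideal.span {(X : Polynomial k) ^ (n + 1)}) →ₐ[k]
        Polynomial k ⧸ Ideal.span {(X : Polynomial k) ^ n})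
    (hredA : ∀ y : Polynomial k, redA (Ideal.Quotient.mk _ y) = Ideal.Quotient.mk _ y)
    -- the reduction `B_n → B_{n-1}` (`tⁿ ↦ 0`)
    (redB : (kTE k ⧸ Ideal.span {tP k ^ (n + 1), eP k ^ 2}) →ₐ[k]
        kTE k ⧸ Ideal.span {tP k ^ n, eP k ^ 2})
    (hredB : ∀ x : kTE k, redB (Ideal.Quotient.mk _ x) = Ideal.Quotient.mk _ x)
    -- the canonical surjection `B_n → C_n`
    (s : (kTE k ⧸ Ideal.span {tP k ^ (n + 1), eP k ^ 2}) →ₐ[k]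
        kTE k ⧸ Ideal.span {tP k ^ (n + 1), eP k ^ 2, eP k * tP k ^ n})
    (hs : ∀ x : kTE k, s (Ideal.Quotient.mk _ x) = Ideal.Quotient.mk _ x)
    -- surjectivity of the maps between the fibers over `ξ` and `ξ' = redA ∘ ξ`
    (hfib : ∀ ξ : R →ₐ[k] Polynomial k ⧸ Ideal.span {(X : Polynomial k) ^ (n + 1)},
      ∀ ψ : R →ₐ[k] kTE k ⧸ Ideal.span {tP k ^ n, eP k ^ 2},
        πn'.comp ψ = redA.comp ξ →
          ∃ φ : R →ₐ[k] kTE k ⧸ Ideal.span {tP k ^ (n + 1), eP k ^ 2},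
            πn.comp φ = ξ ∧ redB.comp φ = ψ) :
    Function.Surjective
      (fun φ : R →ₐ[k] kTE k ⧸ Ideal.span {tP k ^ (n + 1), eP k ^ 2} => s.comp φ) :=
  hom_to_Bn_surjects_onto_hom_to_Cn_general k n R πn hπn πn' hπn' redA hredA redB hredB s hs hfib
end
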